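/- arXiv:2503.08942 — 2 statements merged into one kernel-verified Lean document; each statement's English description precedes it below -/
import Mathlib

section
/- Under exact EGPO updates with learning rate η satisfying 0 < η ≤ 1/(β+3), for every T ≥ 1 one has KL(π^{(T)} ‖ π*_β) ≤ (2 / (ηβ)) · KL(π*_β ‖ π^{(0)}) · (1 − ηβ)^T. -/
open Real

/-- Tabular softmax policy. -/
noncomputable def softmax {Y : Type*} [Fintype Y] (θ : Y → ℝ) : Y → ℝ :=
  fun y => Real.exp (θ y) / ∑ y', Real.exp (θ y')

/-- Kullback–Leibler divergence between distributions on a finite set. -/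
noncomputable def KLdiv {Y : Type*} [Fintype Y] (p q : Y → ℝ) : ℝ :=
  ∑ y, p y * Real.log (p y / q y)

/-- `(P π)(y) = ∑ y' P(y, y') π(y')`. -/
noncomputable def matVec {Y : Type*} [Fintype Y] (P : Y → Y → ℝ) (p : Y → ℝ) : Y → ℝ :=
  fun y => ∑ y', P y y' * p y'

/-!
Write `s, a, m, b` for the softmax policies of `θ*, θ⁽ᵗ⁾, θ⁽ᵗ⁺¹ᐟ²⁾, θ⁽ᵗ⁺¹⁾` and `e = ηβ`.
Since `θ_ref = θ* - P π*/β`, both half-steps are entropic mirror steps that mix the current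
logits with `θ*`, so the three-point identity for KL gives
`KL(s‖b) - KL(m‖b) = (1-e)(KL(s‖a) - KL(m‖a)) - e KL(m‖s)`: the coupling term
`⟨s - m, P(m - s)⟩` vanishes because `P + Pᵀ = 1`.
The logits of `b` and `m` differ by `ηP(m - a)`, whose sup-norm is at most `η‖m - a‖₁/2`. Hence
`KL(m‖b)` is of second order in `η‖m - a‖₁`, and `KL(b‖s)` exceeds `KL(b‖m) + KL(m‖s)` by at
most a term of relative order `η‖m - a‖₁`. With a Pinsker inequality all error terms are
absorbed as soon as `η ≤ 1/(β+3)`, which yields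
`KL(s‖b) + (e/2) KL(b‖s) ≤ (1-e) KL(s‖a)`.
Iterating, the forward KL decays like `(1-e)ᵗ`, and one more step bounds the reverse KL.
-/

open Finset

section

variable {Y : Type*} [Fintype Y]

lemma KLdiv_eq_sum_mul_log_sub {p q : Y → ℝ} (hq : ∀ y, q y ≠ 0) :
    KLdiv p q = ∑ y, p y * (log (p y) - log (q y)) := by
  refine sum_congr rfl fun y _ => ?_
  rcases eq_or_ne (p y) 0 with hp | hp
  · simp [hp]
  · rw [log_div hp (hq y)]

/-- With `x = y u⁴`, the bound `log u ≥ 1 - u⁻¹` turns this into a polynomial inequality in `u`;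
summed against the weights `2 p + 4 q`, it yields a Pinsker inequality with constant `14/5`. -/
lemma sq_sub_le_mul_log_div {x y : ℝ} (hx : 0 < x) (hy : 0 < y) :
    15 * (x - y) ^ 2 ≤ 7 * (x * log (x / y) - x + y) * (2 * x + 4 * y) := by
  set u := exp (log (x / y) / 4) with hu_def
  have hu : 0 < u := exp_pos _
  have hxu : x = y * u ^ 4 := by
    rw [hu_def, ← exp_nat_mul, Nat.cast_ofNat, mul_div_cancel₀ _ four_ne_zero,
      exp_log (div_pos hx hy)]
    field_simp
  have hlog : log (x / y) = 4 * log u := by rw [hu_def, log_exp]; ring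
  have hlog_ge : 4 * x * (1 - u⁻¹) ≤ x * log (x / y) := by
    rw [hlog, ← mul_assoc, mul_comm x 4]
    exact mul_le_mul_of_nonneg_left (one_sub_inv_le_log_of_pos hu) (by positivity)
  have hdiv_ge : y * (3 * u ^ 4 - 4 * u ^ 3 + 1) ≤ x * log (x / y) - x + y := by
    have : 4 * x * (1 - u⁻¹) = y * (4 * u ^ 4 - 4 * u ^ 3) := by rw [hxu]; field_simp
    linarith
  have hpoly :
      0 ≤ 27 * u ^ 6 - 2 * u ^ 5 - 31 * u ^ 4 - 60 * u ^ 3 + 39 * u ^ 2 + 26 * u + 13 := by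
    nlinarith [sq_nonneg (u - 1), sq_nonneg (u ^ 2 - 1), sq_nonneg (u ^ 2 - u),
      sq_nonneg (u ^ 3 - u ^ 2), sq_nonneg (u ^ 3 - u), sq_nonneg (u ^ 3 - 1),
      mul_nonneg hu.le (sq_nonneg (u ^ 2 - u)), mul_nonneg hu.le (sq_nonneg (u ^ 2 - 1)),
      mul_nonneg hu.le (sq_nonneg (u - 1))]
  have hu_ineq : 15 * (u ^ 4 - 1) ^ 2 ≤ 7 * (3 * u ^ 4 - 4 * u ^ 3 + 1) * (2 * u ^ 4 + 4) := by
    nlinarith [mul_nonneg (sq_nonneg (u - 1)) hpoly]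
  calc 15 * (x - y) ^ 2 = y ^ 2 * (15 * (u ^ 4 - 1) ^ 2) := by rw [hxu]; ring
    _ ≤ y ^ 2 * (7 * (3 * u ^ 4 - 4 * u ^ 3 + 1) * (2 * u ^ 4 + 4)) := by gcongr
    _ = 7 * (y * (3 * u ^ 4 - 4 * u ^ 3 + 1)) * (2 * x + 4 * y) := by rw [hxu]; ring
    _ ≤ 7 * (x * log (x / y) - x + y) * (2 * x + 4 * y) := by gcongr

lemma sq_sum_abs_sub_le_KLdiv {p q : Y → ℝ} (hp : ∀ y, 0 < p y) (hq : ∀ y, 0 < q y)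
    (hp1 : ∑ y, p y = 1) (hq1 : ∑ y, q y = 1) :
    (∑ y, |p y - q y|) ^ 2 ≤ 14 / 5 * KLdiv p q := by
  have hweight : ∀ y ∈ univ, 0 < 2 * p y + 4 * q y := fun y _ => by linarith [hp y, hq y]
  have hweight_sum : ∑ y, (2 * p y + 4 * q y) = 6 := by
    rw [sum_add_distrib, ← mul_sum, ← mul_sum, hp1, hq1]; norm_num
  have hKL : KLdiv p q = ∑ y, (p y * log (p y / q y) - p y + q y) := by
    rw [sum_add_distrib, sum_sub_distrib, hp1, hq1, KLdiv]; ring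
  have hterm : ∀ y ∈ univ, |p y - q y| ^ 2 / (2 * p y + 4 * q y)
      ≤ 7 / 15 * (p y * log (p y / q y) - p y + q y) := fun y hy => by
    rw [div_le_iff₀ (hweight y hy), sq_abs]
    linarith [sq_sub_le_mul_log_div (hp y) (hq y)]
  have hsedrakyan := sq_sum_div_le_sum_sq_div univ (fun y => |p y - q y|) hweight
  rw [hweight_sum] at hsedrakyan
  have := hsedrakyan.trans (sum_le_sum hterm)
  rw [← mul_sum, ← hKL] at this
  linarith

lemma KLdiv_nonneg {p q : Y → ℝ} (hp : ∀ y, 0 < p y) (hq : ∀ y, 0 < q y)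
    (hp1 : ∑ y, p y = 1) (hq1 : ∑ y, q y = 1) : 0 ≤ KLdiv p q := by
  nlinarith [sq_sum_abs_sub_le_KLdiv hp hq hp1 hq1, sq_nonneg (∑ y, |p y - q y|)]

lemma sum_abs_sub_le_two {p q : Y → ℝ} (hp : ∀ y, 0 ≤ p y) (hq : ∀ y, 0 ≤ q y)
    (hp1 : ∑ y, p y = 1) (hq1 : ∑ y, q y = 1) : ∑ y, |p y - q y| ≤ 2 := by
  calc ∑ y, |p y - q y| ≤ ∑ y, (p y + q y) := sum_le_sum fun y _ =>
        (abs_sub _ _).trans_eq (by rw [abs_of_nonneg (hp y), abs_of_nonneg (hq y)])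
    _ = 2 := by rw [sum_add_distrib, hp1, hq1]; norm_num

lemma mul_abs_log_sub_log_le {a b : ℝ} (ha : 0 < a) (hb : 0 < b) :
    a * |log a - log b| ≤ a * (log a - log b) + 2 * |a - b| := by
  rcases le_total (log b) (log a) with hle | hle
  · rw [abs_of_nonneg (sub_nonneg.mpr hle)]
    linarith [abs_nonneg (a - b)]
  · rw [abs_of_nonpos (sub_nonpos.mpr hle)]
    have hgibbs : a * (log b - log a) ≤ b - a := by
      calc a * (log b - log a) = a * log (b / a) := by rw [log_div hb.ne' ha.ne']
        _ ≤ a * (b / a - 1) :=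
          mul_le_mul_of_nonneg_left (log_le_sub_one_of_pos (div_pos hb ha)) ha.le
        _ = b - a := by field_simp
    linarith [neg_abs_le (a - b)]

lemma exp_le_one_add_mul_of_le_two_thirds {τ : ℝ} (h0 : 0 ≤ τ) (h1 : τ ≤ 2 / 3) :
    exp τ ≤ 1 + 143 / 100 * τ := by
  have hexp : exp (2 / 3) ≤ 293 / 150 := by
    have hcube : exp (2 / 3) ^ 3 = exp 1 ^ 2 := by rw [← exp_nat_mul, ← exp_nat_mul]; norm_num
    nlinarith [exp_one_lt_d9, exp_pos 1, exp_pos (2 / 3), sq_nonneg (exp (2 / 3) - 293 / 150)]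
  have hchord := convexOn_exp.2 (Set.mem_univ 0) (Set.mem_univ (2 / 3))
    (by linarith : 0 ≤ 1 - 3 / 2 * τ) (by linarith : 0 ≤ 3 / 2 * τ) (by ring)
  simp only [smul_eq_mul, mul_zero, zero_add, exp_zero, mul_one] at hchord
  rw [show 3 / 2 * τ * (2 / 3) = τ by ring] at hchord
  nlinarith

/-- The quadratic form in `(w, v)` collecting the error terms of one extragradient step; its
discriminant is where the step-size condition `e = ηβ ≤ 1 - 3η`, i.e. `η ≤ 1/(β+3)`, is needed. -/
lemma egpo_quadratic_form_le {η e : ℝ} (hη : 0 < η) (he : 0 < e) (he' : e ≤ 1 - 3 * η)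
    (w v : ℝ) :
    7 / 10 * η ^ 2 * w ^ 2 + 143 / 100 * e * η * (w * v)
      ≤ 5 / 14 * (1 - e) * w ^ 2 + 5 / 14 * e * (1 / 2 - 143 / 100 * η) * v ^ 2 := by
  have hc : 0 ≤ 1 / 2 - 143 / 100 * η := by linarith
  have hα : 0 < 5 / 14 * (1 - e) - 7 / 10 * η ^ 2 := by nlinarith
  have hkey : (143 / 100) ^ 2 * (1 - 3 * η) * η
      ≤ 4 * (15 / 14 - 7 / 10 * η) * (5 / 14) * (1 / 2 - 143 / 100 * η) := by
    nlinarith [sq_nonneg (η - 1 / 3)]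
  have hbracket : 0 ≤ 4 * (5 / 14 * (1 - e) - 7 / 10 * η ^ 2) * (5 / 14)
      * (1 / 2 - 143 / 100 * η) - (143 / 100) ^ 2 * e * η ^ 2 := by
    nlinarith [mul_nonneg (by linarith : 0 ≤ 1 - 3 * η - e) (by positivity :
        0 ≤ 4 * (5 / 14) ^ 2 * (1 / 2 - 143 / 100 * η) + (143 / 100) ^ 2 * η ^ 2),
      mul_le_mul_of_nonneg_left hkey hη.le]
  have hdisc : 0 ≤ 4 * (5 / 14 * (1 - e) - 7 / 10 * η ^ 2)
      * (5 / 14 * e * (1 / 2 - 143 / 100 * η)) - (143 / 100 * e * η) ^ 2 := by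
    nlinarith [mul_nonneg he.le hbracket]
  nlinarith [sq_nonneg (2 * (5 / 14 * (1 - e) - 7 / 10 * η ^ 2) * w - 143 / 100 * e * η * v),
    mul_nonneg hdisc (sq_nonneg v)]

lemma matVec_sub (P : Y → Y → ℝ) (p q : Y → ℝ) :
    matVec P (p - q) = matVec P p - matVec P q := by
  ext y
  simp only [matVec, Pi.sub_apply, mul_sub, sum_sub_distrib]

lemma sum_mul_matVec_self_eq_zero {P : Y → Y → ℝ} (hPsum : ∀ y y', P y y' + P y' y = 1)
    {z : Y → ℝ} (hz : ∑ y, z y = 0) : ∑ y, z y * matVec P z y = 0 := by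
  have hexpand : ∑ y, z y * matVec P z y = ∑ y, ∑ y', P y y' * (z y * z y') := by
    simp only [matVec, mul_sum]
    exact sum_congr rfl fun _ _ => sum_congr rfl fun _ _ => by ring
  have hswap : ∑ y, ∑ y', P y y' * (z y * z y') = ∑ y, ∑ y', P y' y * (z y * z y') := by
    rw [sum_comm]
    exact sum_congr rfl fun _ _ => sum_congr rfl fun _ _ => by ring
  have hsum : ∑ y, ∑ y', P y y' * (z y * z y') + ∑ y, ∑ y', P y' y * (z y * z y') = 0 := by
    simp only [← sum_add_distrib, ← add_mul, hPsum, one_mul, ← sum_mul_sum, hz, zero_mul]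
  linarith

lemma abs_matVec_le_half_sum_abs {P : Y → Y → ℝ} (hP0 : ∀ y y', 0 ≤ P y y')
    (hP1 : ∀ y y', P y y' ≤ 1) {z : Y → ℝ} (hz : ∑ y, z y = 0) (y : Y) :
    |matVec P z y| ≤ (∑ y', |z y'|) / 2 := by
  have hcenter : matVec P z y = ∑ y', (P y y' - 1 / 2) * z y' := by
    simp only [matVec, sub_mul, sum_sub_distrib, ← mul_sum, hz, mul_zero, sub_zero]
  rw [hcenter, sum_div]
  refine (abs_sum_le_sum_abs _ _).trans (sum_le_sum fun y' _ => ?_)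
  have hP : |P y y' - 1 / 2| ≤ 1 / 2 :=
    abs_le.mpr ⟨by linarith [hP0 y y'], by linarith [hP1 y y']⟩
  rw [abs_mul]
  nlinarith [abs_nonneg (z y')]

section Softmax

variable [Nonempty Y]

lemma sum_exp_pos (θ : Y → ℝ) : 0 < ∑ y, exp (θ y) :=
  sum_pos (fun _ _ => exp_pos _) univ_nonempty

lemma softmax_pos (θ : Y → ℝ) (y : Y) : 0 < softmax θ y :=
  div_pos (exp_pos _) (sum_exp_pos θ)

lemma sum_softmax (θ : Y → ℝ) : ∑ y, softmax θ y = 1 := by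
  unfold softmax
  rw [← sum_div]
  exact div_self (sum_exp_pos θ).ne'

lemma sum_softmax_sub_softmax (x x' : Y → ℝ) : ∑ y, (softmax x - softmax x') y = 0 := by
  simp only [Pi.sub_apply, sum_sub_distrib, sum_softmax, sub_self]

lemma log_softmax (θ : Y → ℝ) (y : Y) :
    log (softmax θ y) = θ y - log (∑ y', exp (θ y')) := by
  rw [softmax, log_div (exp_ne_zero _) (sum_exp_pos θ).ne', log_exp]

lemma KLdiv_softmax_right {p : Y → ℝ} (hp : ∑ y, p y = 1) (θ : Y → ℝ) :
    KLdiv p (softmax θ)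
      = ∑ y, p y * log (p y) - ∑ y, p y * θ y + log (∑ y, exp (θ y)) := by
  rw [KLdiv_eq_sum_mul_log_sub fun y => (softmax_pos θ y).ne']
  simp only [log_softmax, mul_sub, sum_sub_distrib, ← sum_mul, hp]
  ring

lemma KLdiv_self_softmax (θ : Y → ℝ) : KLdiv (softmax θ) (softmax θ) = 0 := by
  simp [KLdiv, div_self (softmax_pos θ _).ne']

/-- Three-point identity for one step of entropic mirror descent. -/
lemma KLdiv_sub_KLdiv_softmax_mix {p q : Y → ℝ} (hp : ∑ y, p y = 1)
    (hq : ∑ y, q y = 1) (e : ℝ) (A S g : Y → ℝ) :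
    KLdiv p (softmax fun y => (1 - e) * A y + e * S y + g y)
        - KLdiv q (softmax fun y => (1 - e) * A y + e * S y + g y)
      = (1 - e) * (KLdiv p (softmax A) - KLdiv q (softmax A))
        + e * (KLdiv p (softmax S) - KLdiv q (softmax S)) - ∑ y, (p y - q y) * g y := by
  have hmix : ∀ r : Y → ℝ, ∑ y, r y * ((1 - e) * A y + e * S y + g y)
      = (1 - e) * ∑ y, r y * A y + e * ∑ y, r y * S y + ∑ y, r y * g y := fun r => by
    rw [mul_sum, mul_sum, ← sum_add_distrib, ← sum_add_distrib]
    exact sum_congr rfl fun _ _ => by ring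
  simp only [KLdiv_softmax_right hp, KLdiv_softmax_right hq]
  rw [hmix p, hmix q]
  simp only [sub_mul, sum_sub_distrib]
  ring

lemma KLdiv_softmax_softmax (x x' : Y → ℝ) :
    KLdiv (softmax x) (softmax x')
      = ∑ y, softmax x y * (x y - x' y) - log (∑ y, exp (x y)) + log (∑ y, exp (x' y)) := by
  rw [KLdiv_eq_sum_mul_log_sub fun y => (softmax_pos x' y).ne']
  simp only [log_softmax]
  have hsplit : ∀ y,
      softmax x y * (x y - log (∑ y, exp (x y)) - (x' y - log (∑ y, exp (x' y))))
        = softmax x y * (x y - x' y)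
        - softmax x y * (log (∑ y, exp (x y)) - log (∑ y, exp (x' y))) := fun y => by ring
  rw [sum_congr rfl fun y _ => hsplit y, sum_sub_distrib, ← sum_mul, sum_softmax]
  ring

lemma KLdiv_softmax_add_KLdiv_softmax (x x' : Y → ℝ) :
    KLdiv (softmax x) (softmax x') + KLdiv (softmax x') (softmax x)
      = ∑ y, (softmax x y - softmax x' y) * (x y - x' y) := by
  have hsplit : ∑ y, (softmax x y - softmax x' y) * (x y - x' y)
      = ∑ y, softmax x y * (x y - x' y) + ∑ y, softmax x' y * (x' y - x y) := by
    rw [← sum_add_distrib]; exact sum_congr rfl fun _ _ => by ring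
  rw [KLdiv_softmax_softmax, KLdiv_softmax_softmax, hsplit]
  ring

lemma softmax_le_exp_mul_softmax {x x' : Y → ℝ} {δ : ℝ} (hd : ∀ y, |x y - x' y| ≤ δ)
    (y : Y) :
    softmax x y ≤ exp (2 * δ) * softmax x' y := by
  have hnum : exp (x y) ≤ exp δ * exp (x' y) := by
    rw [← exp_add]; exact exp_le_exp.mpr (by linarith [(abs_le.mp (hd y)).2])
  have hden : exp (-δ) * ∑ z, exp (x' z) ≤ ∑ z, exp (x z) := by
    rw [mul_sum]
    exact sum_le_sum fun z _ => by
      rw [← exp_add]; exact exp_le_exp.mpr (by linarith [(abs_le.mp (hd z)).1])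
  calc softmax x y ≤ exp δ * exp (x' y) / (exp (-δ) * ∑ z, exp (x' z)) :=
        div_le_div₀ (by positivity) hnum (by have := sum_exp_pos x'; positivity) hden
    _ = exp (2 * δ) * softmax x' y := by
        rw [softmax, exp_neg, two_mul, exp_add]; field_simp

lemma abs_softmax_sub_le {x x' : Y → ℝ} {δ : ℝ} (hd : ∀ y, |x y - x' y| ≤ δ) (y : Y) :
    |softmax x y - softmax x' y| ≤ (exp (2 * δ) - 1) * softmax x' y := by
  have hδ : 0 ≤ δ := (abs_nonneg _).trans (hd y)
  have hup := softmax_le_exp_mul_softmax hd y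
  have hdown := softmax_le_exp_mul_softmax (fun z => (abs_sub_comm _ _).trans_le (hd z)) y
  have hx := softmax_pos x y
  have hx' := softmax_pos x' y
  rw [abs_le]
  constructor <;> nlinarith [one_le_exp (by linarith : 0 ≤ 2 * δ)]

lemma KLdiv_softmax_add_KLdiv_softmax_le {x x' : Y → ℝ} {δ : ℝ}
    (hd : ∀ y, |x y - x' y| ≤ δ) :
    KLdiv (softmax x) (softmax x') + KLdiv (softmax x') (softmax x) ≤ 14 / 5 * δ ^ 2 := by
  set d := ∑ y, |softmax x y - softmax x' y|
  have hsymm_le : KLdiv (softmax x) (softmax x') + KLdiv (softmax x') (softmax x) ≤ d * δ := by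
    rw [KLdiv_softmax_add_KLdiv_softmax, sum_mul]
    refine sum_le_sum fun y _ => (le_abs_self _).trans ?_
    rw [abs_mul]
    exact mul_le_mul_of_nonneg_left (hd y) (abs_nonneg _)
  have hpinsker :=
    sq_sum_abs_sub_le_KLdiv (softmax_pos x) (softmax_pos x') (sum_softmax x) (sum_softmax x')
  have h0 := KLdiv_nonneg (softmax_pos x') (softmax_pos x) (sum_softmax x') (sum_softmax x)
  have hd0 : 0 ≤ d := sum_nonneg fun _ _ => abs_nonneg _
  have hδ : 0 ≤ δ := (abs_nonneg _).trans (hd (Classical.arbitrary Y))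
  have hdδ : d ≤ 14 / 5 * δ := by nlinarith
  nlinarith

lemma KLdiv_softmax_le_add {x x' : Y → ℝ} {δ : ℝ} (hd : ∀ y, |x y - x' y| ≤ δ)
    {q : Y → ℝ} (hq : ∀ y, 0 < q y) :
    KLdiv (softmax x) q ≤ KLdiv (softmax x) (softmax x') + KLdiv (softmax x') q
      + (exp (2 * δ) - 1) * (KLdiv (softmax x') q + 2 * ∑ y, |softmax x' y - q y|) := by
  set b := softmax x
  set m := softmax x'
  have hdecomp :
      KLdiv b q = KLdiv b m + KLdiv m q + ∑ y, (b y - m y) * (log (m y) - log (q y)) := by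
    rw [KLdiv_eq_sum_mul_log_sub fun y => (hq y).ne',
      KLdiv_eq_sum_mul_log_sub fun y => (softmax_pos x' y).ne',
      KLdiv_eq_sum_mul_log_sub fun y => (hq y).ne', ← sum_add_distrib, ← sum_add_distrib]
    exact sum_congr rfl fun _ _ => by ring
  have hcross : ∑ y, (b y - m y) * (log (m y) - log (q y))
      ≤ (exp (2 * δ) - 1) * ∑ y, (m y * (log (m y) - log (q y)) + 2 * |m y - q y|) := by
    rw [mul_sum]
    refine sum_le_sum fun y _ => (le_abs_self _).trans ?_
    have hδ : 0 ≤ exp (2 * δ) - 1 := by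
      linarith [one_le_exp (by linarith [(abs_nonneg _).trans (hd y)] : 0 ≤ 2 * δ)]
    calc |(b y - m y) * (log (m y) - log (q y))|
        ≤ (exp (2 * δ) - 1) * m y * |log (m y) - log (q y)| := by
          rw [abs_mul]; exact mul_le_mul_of_nonneg_right (abs_softmax_sub_le hd y) (abs_nonneg _)
      _ ≤ (exp (2 * δ) - 1) * (m y * (log (m y) - log (q y)) + 2 * |m y - q y|) := by
          rw [mul_assoc]
          exact mul_le_mul_of_nonneg_left (mul_abs_log_sub_log_le (softmax_pos x' y) (hq y)) hδ
  rw [sum_add_distrib, ← mul_sum, ← KLdiv_eq_sum_mul_log_sub fun y => (hq y).ne'] at hcross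
  linarith

lemma KLdiv_softmax_correction_le {η e : ℝ} (hη : 0 < η) (he : 0 < e) (he' : e ≤ 1 - 3 * η)
    {S A M B : Y → ℝ}
    (hBM : ∀ y, |B y - M y| ≤ η * (∑ y', |softmax M y' - softmax A y'|) / 2) :
    KLdiv (softmax M) (softmax B) + e / 2 * KLdiv (softmax B) (softmax S)
      ≤ (1 - e) * KLdiv (softmax M) (softmax A) + e * KLdiv (softmax M) (softmax S) := by
  set w := ∑ y, |softmax M y - softmax A y|
  set v := ∑ y, |softmax M y - softmax S y|
  have hw0 : 0 ≤ w := sum_nonneg fun _ _ => abs_nonneg _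
  have hv0 : 0 ≤ v := sum_nonneg fun _ _ => abs_nonneg _
  have hw2 : w ≤ 2 := sum_abs_sub_le_two (fun y => (softmax_pos M y).le)
    (fun y => (softmax_pos A y).le) (sum_softmax M) (sum_softmax A)
  have hw := sq_sum_abs_sub_le_KLdiv (softmax_pos M) (softmax_pos A) (sum_softmax M)
    (sum_softmax A)
  have hv := sq_sum_abs_sub_le_KLdiv (softmax_pos M) (softmax_pos S) (sum_softmax M)
    (sum_softmax S)
  have hKms := KLdiv_nonneg (softmax_pos M) (softmax_pos S) (sum_softmax M) (sum_softmax S)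
  have hKbm := KLdiv_nonneg (softmax_pos B) (softmax_pos M) (sum_softmax B) (sum_softmax M)
  have hsymm := KLdiv_softmax_add_KLdiv_softmax_le hBM
  have hexp : exp (2 * (η * w / 2)) - 1 ≤ 143 / 100 * (η * w) := by
    rw [mul_div_cancel₀ _ two_ne_zero]
    linarith [exp_le_one_add_mul_of_le_two_thirds (by positivity) (by nlinarith : η * w ≤ 2 / 3)]
  have hcross : KLdiv (softmax B) (softmax S) ≤ KLdiv (softmax B) (softmax M)
      + KLdiv (softmax M) (softmax S)
      + 143 / 100 * (η * w) * (KLdiv (softmax M) (softmax S) + 2 * v) :=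
    (KLdiv_softmax_le_add hBM (softmax_pos S)).trans
      (by gcongr (_ + _ + ?_); exact mul_le_mul_of_nonneg_right hexp (by positivity))
  have hquad := egpo_quadratic_form_le hη he he' w v
  nlinarith [mul_le_mul_of_nonneg_left hcross (by positivity : 0 ≤ e / 2),
    mul_le_mul_of_nonneg_left hw (by linarith : 0 ≤ 1 - e),
    mul_le_mul_of_nonneg_left hv (by nlinarith : 0 ≤ e * (1 / 2 - 143 / 100 * η)),
    mul_le_mul_of_nonneg_left hw2 (by positivity : 0 ≤ e * η * KLdiv (softmax M) (softmax S))]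

theorem egpo_step_le {P : Y → Y → ℝ} (hP0 : ∀ y y', 0 ≤ P y y')
    (hP1 : ∀ y y', P y y' ≤ 1) (hPsum : ∀ y y', P y y' + P y' y = 1)
    {η e : ℝ} (hη : 0 < η) (he : 0 < e) (he' : e ≤ 1 - 3 * η) {S A M B : Y → ℝ}
    (hM : M = fun y => (1 - e) * A y + e * S y
      + η * (matVec P (softmax A) y - matVec P (softmax S) y))
    (hB : B = fun y => (1 - e) * A y + e * S y
      + η * (matVec P (softmax M) y - matVec P (softmax S) y)) :
    KLdiv (softmax S) (softmax B) + e / 2 * KLdiv (softmax B) (softmax S)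
      ≤ (1 - e) * KLdiv (softmax S) (softmax A) := by
  have hthree := KLdiv_sub_KLdiv_softmax_mix (sum_softmax S) (sum_softmax M) e A S
    fun y => η * (matVec P (softmax M) y - matVec P (softmax S) y)
  rw [← hB, KLdiv_self_softmax] at hthree
  have hskew : ∑ y, (softmax S y - softmax M y)
      * (η * (matVec P (softmax M) y - matVec P (softmax S) y)) = 0 := by
    calc _ = -η * ∑ y, (softmax M - softmax S) y * matVec P (softmax M - softmax S) y := by
          rw [mul_sum, matVec_sub]
          exact sum_congr rfl fun _ _ => by simp only [Pi.sub_apply]; ring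
      _ = 0 := by rw [sum_mul_matVec_self_eq_zero hPsum (sum_softmax_sub_softmax M S), mul_zero]
  have hBM : ∀ y, |B y - M y| ≤ η * (∑ y', |softmax M y' - softmax A y'|) / 2 := fun y => by
    have hdiff : B y - M y = η * matVec P (softmax M - softmax A) y := by
      rw [hB, hM, matVec_sub]; simp only [Pi.sub_apply]; ring
    rw [hdiff, abs_mul, abs_of_pos hη, mul_div_assoc]
    exact mul_le_mul_of_nonneg_left
      (abs_matVec_le_half_sum_abs hP0 hP1 (sum_softmax_sub_softmax M A) y) hη.le
  linarith [KLdiv_softmax_correction_le (S := S) hη he he' hBM]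

end Softmax

end

lemma reverse_le_of_contraction {D R : ℕ → ℝ} {e : ℝ} (he : 0 < e) (he1 : e ≤ 1)
    (hD : ∀ t, 0 ≤ D t) (hR : ∀ t, 0 ≤ R t)
    (hstep : ∀ t, D (t + 1) + e / 2 * R (t + 1) ≤ (1 - e) * D t) {T : ℕ} (hT : 1 ≤ T) :
    R T ≤ 2 / e * D 0 * (1 - e) ^ T := by
  have hD_le : ∀ t, D t ≤ (1 - e) ^ t * D 0 := by
    intro t
    induction t with
    | zero => simp
    | succ t ih =>
      rw [pow_succ]
      linarith [hstep t, mul_nonneg (by positivity : 0 ≤ e / 2) (hR (t + 1)),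
        mul_le_mul_of_nonneg_left ih (by linarith : 0 ≤ 1 - e)]
  obtain ⟨T, rfl⟩ := Nat.exists_eq_add_of_le' hT
  have hR_le : e / 2 * R (T + 1) ≤ (1 - e) ^ (T + 1) * D 0 := by
    rw [pow_succ]
    linarith [hstep T, hD (T + 1), mul_le_mul_of_nonneg_left (hD_le T) (by linarith : 0 ≤ 1 - e)]
  calc R (T + 1) = 2 / e * (e / 2 * R (T + 1)) := by field_simp
    _ ≤ 2 / e * ((1 - e) ^ (T + 1) * D 0) := by gcongr
    _ = _ := by ring

/-- under exact EGPO updates with `0 < η ≤ 1/(β+3)`, for every `T ≥ 1`,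
`KL(π^{(T)} ‖ π*_β) ≤ (2/(ηβ)) · KL(π*_β ‖ π^{(0)}) · (1 − ηβ)^T`. -/
theorem egpo_exact_linear_convergence_reverse_kl
    {Y : Type*} [Fintype Y] (hY : 2 ≤ Fintype.card Y)
    (P : Y → Y → ℝ)
    (hP0 : ∀ y y', 0 ≤ P y y') (hP1 : ∀ y y', P y y' ≤ 1)
    (hPsum : ∀ y y', P y y' + P y' y = 1)
    (β : ℝ) (hβ : 0 < β)
    (θref : Y → ℝ)
    (θstar : Y → ℝ)
    (hstar : θstar = fun y => θref y + matVec P (softmax θstar) y / β)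
    (η : ℝ) (hη : 0 < η) (hη' : η ≤ 1 / (β + 3))
    (θ θhalf : ℕ → Y → ℝ)
    (hhalf : ∀ t, θhalf t = fun y =>
      (1 - η * β) * θ t y + η * β * (θref y + matVec P (softmax (θ t)) y / β))
    (hstep : ∀ t, θ (t + 1) = fun y =>
      (1 - η * β) * θ t y + η * β * (θref y + matVec P (softmax (θhalf t)) y / β))
    (T : ℕ) (hT : 1 ≤ T) :
    KLdiv (softmax (θ T)) (softmax θstar)
      ≤ 2 / (η * β) * KLdiv (softmax θstar) (softmax (θ 0)) * (1 - η * β) ^ T := by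
  have : Nonempty Y := Fintype.card_pos_iff.mp (by omega)
  have he : 0 < η * β := mul_pos hη hβ
  have he' : η * β ≤ 1 - 3 * η := by
    have := (le_div_iff₀ (by linarith : 0 < β + 3)).mp hη'
    linarith
  have hmix : ∀ θ₀ θ₁ : Y → ℝ,
      (fun y => (1 - η * β) * θ₀ y + η * β * (θref y + matVec P (softmax θ₁) y / β))
        = fun y => (1 - η * β) * θ₀ y + η * β * θstar y
          + η * (matVec P (softmax θ₁) y - matVec P (softmax θstar) y) := fun θ₀ θ₁ => by
    ext y
    rw [congrFun hstar y]
    field_simp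
    ring
  have hcontract := fun t => egpo_step_le hP0 hP1 hPsum hη he he'
    ((hhalf t).trans (hmix _ _)) ((hstep t).trans (hmix _ _))
  exact reverse_le_of_contraction he (by linarith)
    (fun t => KLdiv_nonneg (softmax_pos _) (softmax_pos (θ t)) (sum_softmax _) (sum_softmax _))
    (fun t => KLdiv_nonneg (softmax_pos (θ t)) (softmax_pos _) (sum_softmax _) (sum_softmax _))
    hcontract hT
end

section
/- Let μ be a fixed probability distribution on Y, let π^s = Uniform(Y) × Uniform(Y), and let η > 0, β > 0. Then the single gradient step θ' = θ − (ηβ|Y|/4) · ∇_θ L_IPO(θ; π^s, μ) induces the same softmax policy as the EGPO-style update: π_{θ'} = π_{θ''} where θ'' = (1−ηβ) θ + ηβ (θ_ref + (Pμ)/β). In particular, θ' and θ'' differ only by a multiple of the all-ones vector. -/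
/-! The log-ratio inside the IPO loss is affine in `θ`: it equals `g y - g y'` for
`g = θ - a`, `a = θref + Pμ/β`, so the loss is `|Y|⁻² ∑ y, ∑ y', (g y - g y')²`. The gradient of
this pairwise sum at `g` is `4 (|Y| g - ∑ g)`, so the step with rate `ηβ|Y|/4` sends `θ` to
`θ - ηβ (θ - a)` plus the constant `ηβ (∑ g) / |Y|`, to which softmax is blind. -/

open Real

/-- Generalized IPO loss with sampling distribution `Uniform(Y) × Uniform(Y)` and fixed
comparison distribution `μdist` (not differentiated through). -/
noncomputable def LIPO {Y : Type*} [Fintype Y] (P : Y → Y → ℝ) (β : ℝ) (θref : Y → ℝ)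
    (μdist : Y → ℝ) (θ : Y → ℝ) : ℝ :=
  ((Fintype.card Y : ℝ)⁻¹) ^ 2 * ∑ y, ∑ y',
    (Real.log (softmax θ y * softmax θref y' / (softmax θ y' * softmax θref y))
      - β⁻¹ * ∑ y'', μdist y'' * (P y y'' - P y' y'')) ^ 2

open Finset

section Softmax

variable {Y : Type*} [Fintype Y]

theorem softmax_add_const (θ : Y → ℝ) (c : ℝ) : softmax (fun z => θ z + c) = softmax θ := by
  funext y
  simp only [softmax, Real.exp_add, ← sum_mul]
  exact mul_div_mul_right _ _ (Real.exp_ne_zero c)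

theorem softmax_div_softmax (θ : Y → ℝ) (y y' : Y) :
    softmax θ y / softmax θ y' = Real.exp (θ y - θ y') := by
  have hZ : ∑ x, Real.exp (θ x) ≠ 0 :=
    (sum_pos (fun _ _ => Real.exp_pos _) ⟨y, mem_univ y⟩).ne'
  simp only [softmax, div_div_div_cancel_right₀ hZ, Real.exp_sub]

theorem log_softmax_ratio (θ θref : Y → ℝ) (y y' : Y) :
    Real.log (softmax θ y * softmax θref y' / (softmax θ y' * softmax θref y))
      = (θ y - θref y) - (θ y' - θref y') := by
  rw [mul_div_mul_comm, softmax_div_softmax, softmax_div_softmax, ← Real.exp_add, Real.log_exp]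
  ring

end Softmax

section PairwiseSquares

variable {Y : Type*} [Fintype Y]

theorem sum_sum_sub_mul_sub (g v : Y → ℝ) :
    ∑ y, ∑ y', (g y - g y') * (v y - v y')
      = 2 * (Fintype.card Y * ∑ y, g y * v y - (∑ y, g y) * ∑ y, v y) := by
  have hexpand : ∀ y y' : Y, (g y - g y') * (v y - v y')
      = g y * v y + g y' * v y' - (g y * v y' + g y' * v y) := fun _ _ => by ring
  simp only [hexpand, sum_sub_distrib, sum_add_distrib, sum_const, card_univ, nsmul_eq_mul,
    ← mul_sum, ← sum_mul]
  ring

noncomputable def pairwiseSqDiff (g : Y → ℝ) : ℝ := ∑ y, ∑ y', (g y - g y') ^ 2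

theorem hasFDerivAt_pairwiseSqDiff (g : Y → ℝ) :
    HasFDerivAt pairwiseSqDiff
      (∑ y, ∑ y', (2 * (g y - g y')) •
        (ContinuousLinearMap.proj (R := ℝ) (φ := fun _ : Y => ℝ) y
          - ContinuousLinearMap.proj (R := ℝ) (φ := fun _ : Y => ℝ) y')) g := by
  refine HasFDerivAt.fun_sum fun y _ => HasFDerivAt.fun_sum fun y' _ => ?_
  have hdiff : HasFDerivAt (fun t : Y → ℝ => t y - t y')
      (ContinuousLinearMap.proj (R := ℝ) (φ := fun _ : Y => ℝ) y
        - ContinuousLinearMap.proj (R := ℝ) (φ := fun _ : Y => ℝ) y') g :=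
    (hasFDerivAt_apply y g).sub (hasFDerivAt_apply y' g)
  exact (hdiff.pow 2).congr_fderiv (by norm_num)

theorem fderiv_pairwiseSqDiff_apply (g v : Y → ℝ) :
    fderiv ℝ pairwiseSqDiff g v
      = 4 * (Fintype.card Y * ∑ y, g y * v y - (∑ y, g y) * ∑ y, v y) := by
  simp only [(hasFDerivAt_pairwiseSqDiff g).fderiv, _root_.sum_apply, smul_apply, sub_apply,
    ContinuousLinearMap.proj_apply, smul_eq_mul, mul_assoc, ← mul_sum, sum_sum_sub_mul_sub]
  ring

end PairwiseSquares

section IPO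

variable {Y : Type*} [Fintype Y] (P : Y → Y → ℝ) (β : ℝ) (θref μdist : Y → ℝ)

noncomputable def ipoTarget : Y → ℝ := fun y => θref y + matVec P μdist y / β

theorem sum_mul_sub_eq_matVec_sub (y y' : Y) :
    ∑ y'', μdist y'' * (P y y'' - P y' y'') = matVec P μdist y - matVec P μdist y' := by
  simp only [matVec, ← sum_sub_distrib]
  exact sum_congr rfl fun _ _ => by ring

theorem LIPO_eq_pairwiseSqDiff :
    LIPO P β θref μdist = fun t => ((Fintype.card Y : ℝ)⁻¹) ^ 2 *
      pairwiseSqDiff (t - ipoTarget P β θref μdist) := by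
  funext t
  simp only [LIPO, pairwiseSqDiff, log_softmax_ratio, sum_mul_sub_eq_matVec_sub, ipoTarget,
    Pi.sub_apply]
  congr 1
  refine sum_congr rfl fun y _ => sum_congr rfl fun y' _ => ?_
  ring

theorem fderiv_LIPO_apply_single [DecidableEq Y] (θ : Y → ℝ) (z : Y) :
    fderiv ℝ (LIPO P β θref μdist) θ (Pi.single z 1)
      = ((Fintype.card Y : ℝ)⁻¹) ^ 2 * (4 * (Fintype.card Y * (θ - ipoTarget P β θref μdist) z
          - ∑ y, (θ - ipoTarget P β θref μdist) y)) := by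
  have hdiff : DifferentiableAt ℝ (fun t => pairwiseSqDiff (t - ipoTarget P β θref μdist)) θ :=
    (differentiableAt_comp_sub _).mpr (hasFDerivAt_pairwiseSqDiff _).differentiableAt
  rw [LIPO_eq_pairwiseSqDiff, fderiv_const_mul hdiff, fderiv_comp_sub,
    smul_apply, fderiv_pairwiseSqDiff_apply, smul_eq_mul]
  simp [Pi.single_apply]

end IPO

theorem ipo_gradient_step_equals_egpo_update_general
    {Y : Type*} [Fintype Y] [DecidableEq Y]
    (P : Y → Y → ℝ)
    (β : ℝ) (η : ℝ)
    (θref : Y → ℝ)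
    (μdist : Y → ℝ)
    (θ θ' θ'' : Y → ℝ)
    (hθ' : θ' = fun z => θ z
      - η * β * (Fintype.card Y : ℝ) / 4 * fderiv ℝ (LIPO P β θref μdist) θ (Pi.single z 1))
    (hθ'' : θ'' = fun z => (1 - η * β) * θ z + η * β * (θref z + matVec P μdist z / β)) :
    softmax θ' = softmax θ'' ∧ ∃ c : ℝ, θ' = fun z => θ'' z + c := by
  set S := ∑ y, (θ - ipoTarget P β θref μdist) y with hS
  have hstep : θ' = fun z => θ'' z + η * β * S / Fintype.card Y := by
    funext z
    have hN : (Fintype.card Y : ℝ) ≠ 0 := Nat.cast_ne_zero.mpr (Fintype.card_pos_iff.mpr ⟨z⟩).ne'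
    rw [hθ', hθ'']
    dsimp only
    rw [fderiv_LIPO_apply_single, ← hS]
    simp only [ipoTarget, Pi.sub_apply]
    field_simp
    ring
  exact ⟨by rw [hstep, softmax_add_const], _, hstep⟩

/-- a single gradient step on the generalized IPO loss with learning rate
`ηβ|Y|/4` induces the same softmax policy as the EGPO-style update
`θ'' = (1−ηβ) θ + ηβ (θ_ref + (Pμ)/β)`; moreover `θ'` and `θ''` differ by a multiple of the
all-ones vector. -/
theorem ipo_gradient_step_equals_egpo_update
    {Y : Type*} [Fintype Y] [DecidableEq Y] (hY : 2 ≤ Fintype.card Y)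
    (P : Y → Y → ℝ)
    (hP0 : ∀ y y', 0 ≤ P y y') (hP1 : ∀ y y', P y y' ≤ 1)
    (hPsum : ∀ y y', P y y' + P y' y = 1)
    (β : ℝ) (hβ : 0 < β) (η : ℝ) (hη : 0 < η)
    (θref : Y → ℝ)
    (μdist : Y → ℝ) (hμdist : (∀ y, 0 ≤ μdist y) ∧ ∑ y, μdist y = 1)
    (θ θ' θ'' : Y → ℝ)
    (hθ' : θ' = fun z => θ z
      - η * β * (Fintype.card Y : ℝ) / 4 * fderiv ℝ (LIPO P β θref μdist) θ (Pi.single z 1))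
    (hθ'' : θ'' = fun z => (1 - η * β) * θ z + η * β * (θref z + matVec P μdist z / β)) :
    softmax θ' = softmax θ'' ∧ ∃ c : ℝ, θ' = fun z => θ'' z + c :=
  ipo_gradient_step_equals_egpo_update_general P β η θref μdist θ θ' θ'' hθ' hθ''
end
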